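/- arXiv:math/0505462 — 2 statements merged into one kernel-verified Lean document; each statement's English description precedes it below -/
import Mathlib

section
/- For every n ≥ 2 and R ≥ 0, there exists a configuration x = (C, J_1, …, J_n) ∈ M_n(R) having a folded arm (i.e. C = B_k for some k) if and only if R ≤ R_n. -/
/-- Euclidean norm of a vector in ℝ². -/
noncomputable def enorm2 (v : ℝ × ℝ) : ℝ := Real.sqrt (v.1 ^ 2 + v.2 ^ 2)

/-- The k-th fixed endpoint `B_k = (R cos(2kπ/n), R sin(2kπ/n))` (indices from 0). -/
noncomputable def Bpt (n : ℕ) (R : ℝ) (k : Fin n) : ℝ × ℝ :=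
  (R * Real.cos (2 * (k.val : ℝ) * Real.pi / (n : ℝ)),
   R * Real.sin (2 * (k.val : ℝ) * Real.pi / (n : ℝ)))

/-- The configuration space `M_n(R)` of spiders with `n` arms of radius `R`,
as a subset of `(ℝ²)^{n+1} ≅ ℝ^{2n+2}`: a pair `(C, J)` with
`|C − J_k| = 1` and `|J_k − B_k| = 1` for all `k`. -/
noncomputable def MSpace (n : ℕ) (R : ℝ) : Set ((ℝ × ℝ) × (Fin n → ℝ × ℝ)) :=
  {x | ∀ k : Fin n, enorm2 (x.1 - x.2 k) = 1 ∧ enorm2 (x.2 k - Bpt n R k) = 1}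

/-- `d_n`, the maximum distance between `n`-th roots of unity. -/
noncomputable def dmax (n : ℕ) : ℝ :=
  if Even n then 2
  else Real.sqrt (2 - 2 * Real.cos (2 * ((n / 2 : ℕ) : ℝ) * Real.pi / (n : ℝ)))

/-- The critical radius `R_n = 2 / d_n`. -/
noncomputable def Rcrit (n : ℕ) : ℝ := 2 / dmax n


/-!
The chord `|B_k - B_j|` equals `R √(2 - 2 cos (2π(k - j)/n))`, which is largest, equal to `R d_n`,
for `j ≡ k + ⌊n/2⌋ (mod n)`. If the body sits on `B_k`, the triangle inequality through the joint
`J_j` gives `|B_k - B_j| ≤ 2` for every `j`, hence `R d_n ≤ 2`. Conversely, if `R d_n ≤ 2`, put the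
body on `B_0`: every `B_j` is within distance 2 of it, and two unit circles whose centres are at
most 2 apart meet, which provides the joints.
-/

open Real

lemma enorm2_eq_norm (v : ℝ × ℝ) : enorm2 v = ‖Complex.equivRealProdCLM.symm v‖ := by
  rw [Complex.equivRealProdCLM_symm_apply, Complex.norm_add_mul_I]
  rfl

lemma enorm2_sub_le_add (u v w : ℝ × ℝ) : enorm2 (u - w) ≤ enorm2 (u - v) + enorm2 (v - w) := by
  simp only [enorm2_eq_norm, map_sub]
  exact norm_sub_le_norm_sub_add_norm_sub _ _ _

lemma exists_norm_eq_one_norm_sub_eq_one {z : ℂ} (hz : ‖z‖ ≤ 2) :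
    ∃ w : ℂ, ‖w‖ = 1 ∧ ‖z - w‖ = 1 := by
  rcases eq_or_ne z 0 with rfl | hz0
  · exact ⟨1, by simp, by simp⟩
  have hzpos : 0 < ‖z‖ := norm_pos_iff.mpr hz0
  -- `z (1/2 ± t i)` are the apexes of the isosceles triangles with base `z` and legs of length 1
  set t := √(1 / ‖z‖ ^ 2 - 1 / 4)
  have apex : ∀ s : ℝ, s ^ 2 = t ^ 2 → ‖z * ((1 / 2 : ℝ) + s * Complex.I)‖ = 1 := by
    intro s hs
    have ht : t ^ 2 = 1 / ‖z‖ ^ 2 - 1 / 4 :=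
      sq_sqrt (by rw [sub_nonneg, div_le_div_iff₀ (by norm_num) (by positivity)]; nlinarith)
    rw [norm_mul, Complex.norm_add_mul_I, hs, ht, show (1 / 2 : ℝ) ^ 2 + (1 / ‖z‖ ^ 2 - 1 / 4)
      = (1 / ‖z‖) ^ 2 by ring, sqrt_sq (by positivity), mul_one_div_cancel hzpos.ne']
  refine ⟨_, apex t rfl, ?_⟩
  convert apex (-t) (neg_sq t) using 2
  push_cast
  ring

lemma exists_enorm2_sub_eq_one_of_le_two {P Q : ℝ × ℝ} (h : enorm2 (P - Q) ≤ 2) :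
    ∃ J, enorm2 (P - J) = 1 ∧ enorm2 (J - Q) = 1 := by
  rw [enorm2_eq_norm] at h
  obtain ⟨w, hw, hzw⟩ := exists_norm_eq_one_norm_sub_eq_one h
  refine ⟨Q + Complex.equivRealProdCLM w, ?_, ?_⟩
  · rwa [enorm2_eq_norm, sub_add_eq_sub_sub, map_sub, map_sub,
      ContinuousLinearEquiv.symm_apply_apply, ← map_sub]
  · rwa [enorm2_eq_norm, add_sub_cancel_left, ContinuousLinearEquiv.symm_apply_apply]

lemma enorm2_polar_sub (R a b : ℝ) (hR : 0 ≤ R) :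
    enorm2 ((R * cos a, R * sin a) - (R * cos b, R * sin b)) = R * √(2 - 2 * cos (a - b)) := by
  have h : (R * cos a - R * cos b) ^ 2 + (R * sin a - R * sin b) ^ 2
      = R ^ 2 * (2 - 2 * cos (a - b)) := by
    rw [cos_sub]
    nlinarith [sin_sq_add_cos_sq a, sin_sq_add_cos_sq b]
  rw [enorm2, Prod.fst_sub, Prod.snd_sub, h, sqrt_mul (sq_nonneg R), sqrt_sq hR]

lemma enorm2_Bpt_sub_Bpt {n : ℕ} {R : ℝ} (hR : 0 ≤ R) (k j : Fin n) :
    enorm2 (Bpt n R k - Bpt n R j)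
      = R * √(2 - 2 * cos (2 * (((k : ℕ) - (j : ℕ) : ℤ) : ℝ) * π / n)) := by
  rw [Bpt, Bpt, enorm2_polar_sub _ _ _ hR]
  push_cast
  ring_nf

lemma two_mul_half_mul_pi_div_le_pi (n : ℕ) : 2 * (n / 2 : ℕ) * π / n ≤ π := by
  rcases n.eq_zero_or_pos with rfl | hn
  · simp [pi_nonneg]
  rw [div_le_iff₀ (by positivity)]
  have : 2 * ((n / 2 : ℕ) : ℝ) ≤ n := by exact_mod_cast Nat.mul_div_le n 2
  nlinarith [pi_pos]

lemma cos_two_mul_half_mul_pi_div_le_of_lt {n k : ℕ} (hk : k < n) :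
    cos (2 * (n / 2 : ℕ) * π / n) ≤ cos (2 * k * π / n) := by
  have hle := two_mul_half_mul_pi_div_le_pi n
  rcases le_or_gt k (n / 2) with hkm | hkm
  · apply cos_le_cos_of_nonneg_of_le_pi (by positivity) hle
    gcongr
  · have hn : (n : ℝ) ≠ 0 := Nat.cast_ne_zero.mpr (by omega)
    have hsymm : (2 * k * π / n : ℝ) = 2 * π - 2 * ((n - k : ℕ) : ℝ) * π / n := by
      rw [Nat.cast_sub hk.le]
      field_simp
      ring
    rw [hsymm, cos_two_pi_sub]
    apply cos_le_cos_of_nonneg_of_le_pi (by positivity) hle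
    gcongr
    omega

lemma cos_two_mul_half_mul_pi_div_le {n : ℕ} (hn : 0 < n) (k : ℤ) :
    cos (2 * (n / 2 : ℕ) * π / n) ≤ cos (2 * k * π / n) := by
  have hn' : (n : ℤ) ≠ 0 := by positivity
  obtain ⟨r, hr⟩ : ∃ r : ℕ, (r : ℤ) = k % n := ⟨_, Int.toNat_of_nonneg (Int.emod_nonneg k hn')⟩
  have hrn : r < n := by have := Int.emod_lt_of_pos k (by positivity : (0 : ℤ) < n); omega
  have hk : (2 * k * π / n : ℝ) = 2 * r * π / n + (k / n : ℤ) * (2 * π) := by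
    have hdecomp : (k : ℝ) = r + n * (k / n : ℤ) := by
      exact_mod_cast (hr ▸ Int.emod_add_mul_ediv k n).symm
    rw [hdecomp]
    field_simp
  rw [hk, (cos_periodic.int_mul _) _]
  exact cos_two_mul_half_mul_pi_div_le_of_lt hrn

lemma cos_two_mul_sub_add_half_mul_pi_div {n : ℕ} (hn : 0 < n) (k : ℕ) :
    cos (2 * (((k : ℤ) - ((k + n / 2) % n : ℕ) : ℤ) : ℝ) * π / n)
      = cos (2 * (n / 2 : ℕ) * π / n) := by
  have hmod := Nat.mod_add_div (k + n / 2) n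
  have hk : (2 * (((k : ℤ) - ((k + n / 2) % n : ℕ) : ℤ) : ℝ) * π / n)
      = ((k + n / 2) / n : ℕ) * (2 * π) - 2 * (n / 2 : ℕ) * π / n := by
    have hZ : ((k : ℤ) - ((k + n / 2) % n : ℕ) : ℤ) = n * ((k + n / 2) / n : ℕ) - (n / 2 : ℕ) := by
      have := congrArg (Nat.cast : ℕ → ℤ) hmod
      push_cast at this ⊢
      linarith
    rw [hZ]
    simp only [Int.cast_sub, Int.cast_mul, Int.cast_natCast]
    field_simp
  rw [hk]
  exact_mod_cast cos_int_mul_two_pi_sub _ _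

lemma dmax_eq_sqrt {n : ℕ} (hn : 0 < n) : dmax n = √(2 - 2 * cos (2 * (n / 2 : ℕ) * π / n)) := by
  rw [dmax]
  split_ifs with h
  · have hhalf : (2 * (n / 2 : ℕ) * π / n : ℝ) = π := by
      rw [← Nat.cast_two, ← Nat.cast_mul, Nat.mul_div_cancel' h.two_dvd]
      field_simp
    rw [hhalf, cos_pi, show (2 : ℝ) - 2 * -1 = 2 ^ 2 by norm_num, sqrt_sq zero_le_two]
  · rfl

lemma dmax_pos {n : ℕ} (hn : 2 ≤ n) : 0 < dmax n := by
  rw [dmax_eq_sqrt (by omega), sqrt_pos, sub_pos]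
  have hhalf : (0 : ℝ) < 2 * (n / 2 : ℕ) * π / n := by
    have : 0 < n / 2 := by omega
    positivity
  have := cos_lt_cos_of_nonneg_of_le_pi le_rfl (two_mul_half_mul_pi_div_le_pi n) hhalf
  rw [cos_zero] at this
  linarith

lemma enorm2_Bpt_sub_Bpt_le {n : ℕ} (hn : 0 < n) {R : ℝ} (hR : 0 ≤ R) (k j : Fin n) :
    enorm2 (Bpt n R k - Bpt n R j) ≤ R * dmax n := by
  rw [enorm2_Bpt_sub_Bpt hR, dmax_eq_sqrt hn]
  gcongr
  linarith [cos_two_mul_half_mul_pi_div_le hn ((k : ℕ) - (j : ℕ))]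

lemma exists_enorm2_Bpt_sub_Bpt_eq {n : ℕ} (hn : 0 < n) {R : ℝ} (hR : 0 ≤ R) (k : Fin n) :
    ∃ j, enorm2 (Bpt n R k - Bpt n R j) = R * dmax n :=
  ⟨⟨(k + n / 2) % n, Nat.mod_lt _ hn⟩, by
    rw [enorm2_Bpt_sub_Bpt hR, dmax_eq_sqrt hn, cos_two_mul_sub_add_half_mul_pi_div hn]⟩

/-- For `n ≥ 2` and `R ≥ 0`, there exists a configuration in `M_n(R)` with a folded
arm (`C = B_k` for some `k`) if and only if `R ≤ R_n`. -/
theorem stmt2 (n : ℕ) (hn : 2 ≤ n) (R : ℝ) (hR : 0 ≤ R) :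
    (∃ x ∈ MSpace n R, ∃ k : Fin n, x.1 = Bpt n R k) ↔ R ≤ Rcrit n := by
  have hn0 : 0 < n := by omega
  rw [Rcrit, le_div_iff₀ (dmax_pos hn)]
  constructor
  · rintro ⟨⟨C, J⟩, hx, k, rfl⟩
    obtain ⟨j, hj⟩ := exists_enorm2_Bpt_sub_Bpt_eq hn0 hR k
    calc R * dmax n = enorm2 (Bpt n R k - Bpt n R j) := hj.symm
      _ ≤ enorm2 (Bpt n R k - J j) + enorm2 (J j - Bpt n R j) := enorm2_sub_le_add _ _ _
      _ = 2 := by rw [(hx j).1, (hx j).2]; norm_num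
  · intro h
    let k₀ : Fin n := ⟨0, hn0⟩
    choose J hJ using fun k ↦
      exists_enorm2_sub_eq_one_of_le_two ((enorm2_Bpt_sub_Bpt_le hn0 hR k₀ k).trans h)
    exact ⟨(Bpt n R k₀, J), hJ, k₀, rfl⟩
end

section
/- Suppose 0 < R < 2 and let x = (C, J_1, …, J_n) ∈ M_n(R) = F⁻¹(0). The Fréchet derivative of F at x fails to be surjective onto ℝ^{2n} if and only if R = R_n and one of the following holds: (i) n is even and there exists k such that C = B_k, the (k + n/2)-th arm is stretched out (|C − B_{k+n/2}| = 2), and J_k lies on the line through B_k and B_{k+n/2} (the folded arm and the stretched-out arm lie on a common line); (ii) n is odd and there exists k such that C = B_k and there exist two distinct indices i ≠ j with |C − B_i| = |C − B_j| = 2 (a folded arm together with two stretched-out arms). In either case the body C is located at some B_k. -/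
/-- The defining map `F = (f_1, …, f_{2n}) : ℝ^{2n+2} → ℝ^{2n}`. -/
noncomputable def Fmap (n : ℕ) (R : ℝ) (x : (ℝ × ℝ) × (Fin n → ℝ × ℝ)) :
    Fin n → ℝ × ℝ := fun k =>
  ((x.1.1 - (x.2 k).1) ^ 2 + (x.1.2 - (x.2 k).2) ^ 2 - 1,
   ((x.2 k).1 - (Bpt n R k).1) ^ 2 + ((x.2 k).2 - (Bpt n R k).2) ^ 2 - 1)

/-!
`DF(x)(u, v)_k = (2⟨a_k, u - v_k⟩, 2⟨b_k, v_k⟩)`, so a covector `(λ_k, μ_k)_k` annihilates the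
range of `DF(x)` iff `∑ λ_k a_k = 0` and `λ_k a_k = μ_k b_k` for all `k`. As `a_k` and `b_k` are
unit vectors, `λ_k ≠ 0` forces arm `k` to be stretched out or folded, and `DF(x)` fails to be onto
iff the vectors `a_k` of these critical arms are linearly dependent.

At most one arm is folded, since the `B_k` are distinct. If none is, the critical arms end at the
(at most two) points where the circles `|B| = R` and `|C - B| = 2` meet, and two such arms cannot
balance. So `C = B_k` for a folded arm `k`, and another arm `j` is stretched out:
`|B_k - B_j| = 2`. The longest chord of the polygon is `R d_n`, attained at `B_{k + ⌊n/2⌋}`, while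
`|C - B_i| ≤ 2` for all `i`; hence `R d_n = 2`. For even `n` the only stretched arm is then the
antipodal one, and the relation between `a_k` and `a_{k + n/2}` is the collinearity; for odd `n`
the arms `k + ⌊n/2⌋` and `k + ⌊n/2⌋ + 1` are both stretched out. Conversely, a folded arm with a
parallel stretched one, or with two stretched ones (three vectors in `ℝ²`), gives a dependence.
-/

open Real

namespace Spider

def dot (u v : ℝ × ℝ) : ℝ := u.1 * v.1 + u.2 * v.2

def cross (u v : ℝ × ℝ) : ℝ := u.1 * v.2 - u.2 * v.1

lemma dot_self_nonneg (u : ℝ × ℝ) : 0 ≤ dot u u := by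
  unfold dot; nlinarith [mul_self_nonneg u.1, mul_self_nonneg u.2]

lemma dot_self_eq_zero {u : ℝ × ℝ} : dot u u = 0 ↔ u = 0 := by
  refine ⟨fun h => ?_, fun h => by simp [h, dot]⟩
  unfold dot at h
  ext <;> simp <;> nlinarith [mul_self_nonneg u.1, mul_self_nonneg u.2]

lemma enorm2_eq_two_iff {v : ℝ × ℝ} : enorm2 v = 2 ↔ dot v v = 4 := by
  rw [enorm2, sqrt_eq_iff_mul_self_eq_of_pos two_pos]
  simp only [dot, ← sq]
  norm_num [eq_comm]

lemma eq_or_eq_neg_of_cross_eq_zero {u v : ℝ × ℝ} (hu : dot u u = 1) (hv : dot v v = 1)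
    (h : cross u v = 0) : u = v ∨ u = -v := by
  -- Lagrange's identity `(u ⬝ v)² + (u × v)² = |u|² |v|²`
  have hsq : (dot u v - 1) * (dot u v + 1) = 0 := by
    unfold dot cross at *
    linear_combination (v.1 * v.1 + v.2 * v.2) * hu + hv - (u.1 * v.2 - u.2 * v.1) * h
  rcases mul_eq_zero.1 hsq with h1 | h1
  · left
    rw [← sub_eq_zero, ← dot_self_eq_zero]
    unfold dot at *
    simp only [Prod.fst_sub, Prod.snd_sub]
    linear_combination hu + hv - 2 * h1
  · right
    rw [← sub_eq_zero, sub_neg_eq_add, ← dot_self_eq_zero]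
    unfold dot at *
    simp only [Prod.fst_add, Prod.snd_add]
    linear_combination hu + hv + 2 * h1

lemma eq_or_eq_neg_of_smul_eq_smul {u v : ℝ × ℝ} (hu : dot u u = 1) (hv : dot v v = 1)
    {s t : ℝ} (hs : s ≠ 0) (h : s • u = t • v) : u = v ∨ u = -v := by
  refine eq_or_eq_neg_of_cross_eq_zero hu hv ?_
  have h1 := congrArg Prod.fst h
  have h2 := congrArg Prod.snd h
  simp only [Prod.smul_fst, Prod.smul_snd, smul_eq_mul] at h1 h2
  have : s * cross u v = 0 := by unfold cross; linear_combination v.2 * h1 - v.1 * h2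
  exact (mul_eq_zero.1 this).resolve_left hs

lemma dot_add_self_le_four {u v : ℝ × ℝ} (hu : dot u u = 1) (hv : dot v v = 1) :
    dot (u + v) (u + v) ≤ 4 := by
  unfold dot at *
  simp only [Prod.fst_add, Prod.snd_add]
  nlinarith [sq_nonneg (u.1 - v.1), sq_nonneg (u.2 - v.2)]

lemma eq_of_dot_add_self_eq_four {u v : ℝ × ℝ} (hu : dot u u = 1) (hv : dot v v = 1)
    (h : dot (u + v) (u + v) = 4) : u = v := by
  rw [← sub_eq_zero, ← dot_self_eq_zero]
  unfold dot at *
  simp only [Prod.fst_add, Prod.snd_add, Prod.fst_sub, Prod.snd_sub] at *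
  linear_combination 2 * hu + 2 * hv - h

lemma cross_eq_zero_of_dot_eq_zero {u v w : ℝ × ℝ} (hw : w ≠ 0) (hu : dot u w = 0)
    (hv : dot v w = 0) : cross u v = 0 := by
  have hw' : dot w w ≠ 0 := fun h => hw (dot_self_eq_zero.1 h)
  have : cross u v * dot w w = 0 := by
    unfold dot cross at *
    linear_combination (v.2 * w.1 - v.1 * w.2) * hu - (u.2 * w.1 - u.1 * w.2) * hv
  exact (mul_eq_zero.1 this).resolve_right hw'

lemma eq_of_cross_eq_zero_of_dot_eq {c u v : ℝ × ℝ} (hc : c ≠ 0) (hu : cross c u = 0)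
    (hv : cross c v = 0) (h : dot c u = dot c v) : u = v := by
  have hc' : dot c c ≠ 0 := fun h => hc (dot_self_eq_zero.1 h)
  -- `|c|² u = (c ⬝ u) c + (c × u) (-c.2, c.1)`
  unfold dot cross at *
  ext
  · have : (c.1 * c.1 + c.2 * c.2) * (u.1 - v.1) = 0 := by
      linear_combination c.1 * h - c.2 * hu + c.2 * hv
    have := (mul_eq_zero.1 this).resolve_left hc'
    linarith
  · have : (c.1 * c.1 + c.2 * c.2) * (u.2 - v.2) = 0 := by
      linear_combination c.2 * h + c.1 * hu - c.1 * hv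
    have := (mul_eq_zero.1 this).resolve_left hc'
    linarith

/-- Two circles with distinct centres `0` and `c` meet in at most two points. -/
lemma eq_or_eq_or_eq_of_mem_two_circles {c p q s : ℝ × ℝ} (hc : c ≠ 0)
    (hq : dot q q = dot p p) (hs : dot s s = dot p p)
    (hcq : dot (c - q) (c - q) = dot (c - p) (c - p))
    (hcs : dot (c - s) (c - s) = dot (c - p) (c - p)) : p = q ∨ p = s ∨ q = s := by
  by_contra! hne
  obtain ⟨hpq, hps, hqs⟩ := hne
  -- `c` and `p + r` are both orthogonal to the chord `p - r`, hence parallel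
  have key : ∀ r, p ≠ r → dot r r = dot p p → dot (c - r) (c - r) = dot (c - p) (c - p) →
      cross c (p + r) = 0 ∧ dot c (p + r) = 2 * dot c p := by
    intro r hpr hr hcr
    have h1 : dot c (p - r) = 0 := by
      simp only [dot, Prod.fst_sub, Prod.snd_sub] at hr hcr ⊢
      linear_combination (hcr - hr) / 2
    have h2 : dot (p + r) (p - r) = 0 := by
      simp only [dot, Prod.fst_sub, Prod.snd_sub, Prod.fst_add, Prod.snd_add] at hr ⊢
      linear_combination -hr
    refine ⟨cross_eq_zero_of_dot_eq_zero (sub_ne_zero.2 hpr) h1 h2, ?_⟩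
    simp only [dot, Prod.fst_sub, Prod.snd_sub, Prod.fst_add, Prod.snd_add] at h1 ⊢
    linear_combination -h1
  obtain ⟨hq1, hq2⟩ := key q hpq hq hcq
  obtain ⟨hs1, hs2⟩ := key s hps hs hcs
  exact hqs (add_left_cancel (eq_of_cross_eq_zero_of_dot_eq hc hq1 hs1 (hq2.trans hs2.symm)))

lemma exists_ne_ne_zero_of_sum_smul_eq_zero {ι K V : Type*} [Fintype ι] [DivisionRing K]
    [AddCommGroup V] [Module K V] {c : ι → K} {v : ι → V}
    (h : ∑ i, c i • v i = 0) {p : ι} (hp : c p ≠ 0) (hv : v p ≠ 0) : ∃ q ≠ p, c q ≠ 0 := by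
  by_contra! hq
  rw [Fintype.sum_eq_single p fun q hqp => by rw [hq q hqp, zero_smul]] at h
  exact smul_ne_zero hp hv h

lemma not_linearIndepOn_finset_iff_exists {ι K V : Type*} [Fintype ι] [Ring K] [AddCommGroup V]
    [Module K V] {v : ι → V} {s : Finset ι} :
    ¬ LinearIndepOn K v (s : Set ι) ↔
      ∃ c : ι → K, c ≠ 0 ∧ (∀ i, c i ≠ 0 → i ∈ s) ∧ ∑ i, c i • v i = 0 := by
  classical
  rw [not_linearIndepOn_finset_iff]
  constructor
  · rintro ⟨f, hf, i, hi, hfi⟩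
    refine ⟨fun j => if j ∈ s then f j else 0, fun h => hfi (by simpa [hi] using congrFun h i),
      fun j hj => by_contra fun h => hj (if_neg h), ?_⟩
    simpa [ite_smul, Finset.sum_ite_mem] using hf
  · rintro ⟨c, hc, hcs, hsum⟩
    obtain ⟨i, hi⟩ := Function.ne_iff.1 hc
    refine ⟨c, ?_, i, hcs i hi, hi⟩
    rw [← hsum]
    refine Finset.sum_subset (Finset.subset_univ s) fun j _ hj => ?_
    rw [not_imp_comm.1 (hcs j) hj, zero_smul]

variable {n : ℕ} {R : ℝ}

lemma not_surjective_iff_exists_sum_dot_eq_zero {V : Type*} [AddCommGroup V] [Module ℝ V]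
    (T : V →ₗ[ℝ] Fin n → ℝ × ℝ) :
    ¬ Function.Surjective T ↔ ∃ w : Fin n → ℝ × ℝ, w ≠ 0 ∧ ∀ z, ∑ k, dot (w k) (T z k) = 0 := by
  constructor
  · intro hT
    rw [← LinearMap.dualMap_injective_iff, injective_iff_map_eq_zero] at hT
    push Not at hT
    obtain ⟨f, hfT, hf⟩ := hT
    have hrepr : ∀ y, f y = ∑ k, dot (f (Pi.single k (1, 0)), f (Pi.single k (0, 1))) (y k) := by
      intro y
      conv_lhs => rw [← Finset.univ_sum_single y]
      refine (map_sum f _ _).trans (Finset.sum_congr rfl fun k _ => ?_)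
      have : (Pi.single k (y k) : Fin n → ℝ × ℝ) =
          (y k).1 • (Pi.single k (1, 0) : Fin n → ℝ × ℝ) +
            (y k).2 • (Pi.single k (0, 1) : Fin n → ℝ × ℝ) := by
        rw [← Pi.single_smul, ← Pi.single_smul, ← Pi.single_add]; simp
      rw [this, map_add, map_smul, map_smul, dot]; simp [mul_comm]
    refine ⟨fun k => (f (Pi.single k (1, 0)), f (Pi.single k (0, 1))), fun hw => hf ?_, fun z => ?_⟩
    · have hw' : ∀ k, f (Pi.single k (1, 0)) = 0 ∧ f (Pi.single k (0, 1)) = 0 :=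
        fun k => Prod.ext_iff.1 (congrFun hw k)
      exact LinearMap.ext fun y => by simp [hrepr y, hw', dot]
    · rw [← hrepr]
      exact LinearMap.congr_fun hfT z
  · rintro ⟨w, hw, horth⟩ hT
    obtain ⟨z, rfl⟩ := hT w
    refine hw (funext fun k => dot_self_eq_zero.1 ?_)
    exact (Finset.sum_eq_zero_iff_of_nonneg fun k _ => dot_self_nonneg _).1 (horth z) k
      (Finset.mem_univ k)

def dotL (u : ℝ × ℝ) : ℝ × ℝ →L[ℝ] ℝ :=
  u.1 • ContinuousLinearMap.fst ℝ ℝ ℝ + u.2 • ContinuousLinearMap.snd ℝ ℝ ℝ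

@[simp] lemma dotL_apply (u v : ℝ × ℝ) : dotL u v = dot u v := by
  simp [dotL, dot]

lemma hasFDerivAt_dot_self {E : Type*} [NormedAddCommGroup E] [NormedSpace ℝ E]
    {f : E → ℝ × ℝ} {f' : E →L[ℝ] ℝ × ℝ} {y : E} (hf : HasFDerivAt f f' y) :
    HasFDerivAt (fun z => dot (f z) (f z)) ((2 : ℝ) • (dotL (f y)).comp f') y :=
  ((hf.fst.mul hf.fst).add (hf.snd.mul hf.snd)).congr_fderiv (by ext v; simp [dotL]; ring)

abbrev Config (n : ℕ) := (ℝ × ℝ) × (Fin n → ℝ × ℝ)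

/-- `a_k = C - J_k`. -/
def upperArm (x : Config n) (k : Fin n) : ℝ × ℝ := x.1 - x.2 k

/-- `b_k = J_k - B_k`. -/
noncomputable def lowerArm (R : ℝ) (x : Config n) (k : Fin n) : ℝ × ℝ := x.2 k - Bpt n R k

variable {x : Config n}

lemma upperArm_add_lowerArm (k : Fin n) :
    upperArm x k + lowerArm R x k = x.1 - Bpt n R k := by
  simp [upperArm, lowerArm]

lemma Fmap_eq_dot (R : ℝ) : Fmap n R = fun x k =>
    (dot (upperArm x k) (upperArm x k) - 1, dot (lowerArm R x k) (lowerArm R x k) - 1) := by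
  funext x k
  simp only [Fmap, dot, upperArm, lowerArm, Prod.fst_sub, Prod.snd_sub, sq]

lemma fderiv_Fmap_apply (u : ℝ × ℝ) (v : Fin n → ℝ × ℝ) (k : Fin n) :
    fderiv ℝ (Fmap n R) x (u, v) k =
      (2 * dot (upperArm x k) (u - v k), 2 * dot (lowerArm R x k) (v k)) := by
  let pJ : Fin n → Config n →L[ℝ] ℝ × ℝ := fun k =>
    (ContinuousLinearMap.proj k).comp (ContinuousLinearMap.snd ℝ _ _)
  have hF : HasFDerivAt (Fmap n R) (ContinuousLinearMap.pi fun k =>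
      ((2 : ℝ) • (dotL (upperArm x k)).comp (ContinuousLinearMap.fst ℝ _ _ - pJ k)).prod
        ((2 : ℝ) • (dotL (lowerArm R x k)).comp (pJ k))) x := by
    rw [Fmap_eq_dot]
    refine hasFDerivAt_pi.2 fun k => ?_
    have ha : HasFDerivAt (fun y : Config n => upperArm y k)
        (ContinuousLinearMap.fst ℝ _ _ - pJ k) x :=
      (ContinuousLinearMap.fst ℝ _ _ - pJ k).hasFDerivAt
    have hb : HasFDerivAt (fun y : Config n => lowerArm R y k) (pJ k) x :=
      (pJ k).hasFDerivAt.sub_const _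
    exact ((hasFDerivAt_dot_self ha).sub_const 1).prodMk ((hasFDerivAt_dot_self hb).sub_const 1)
  simp [hF.fderiv, pJ, dot]; ring

lemma dot_upperArm_self (hx : Fmap n R x = 0) (k : Fin n) :
    dot (upperArm x k) (upperArm x k) = 1 := by
  have := congrArg Prod.fst (congrFun (Fmap_eq_dot R ▸ hx) k)
  simpa [sub_eq_zero] using this

lemma dot_lowerArm_self (hx : Fmap n R x = 0) (k : Fin n) :
    dot (lowerArm R x k) (lowerArm R x k) = 1 := by
  have := congrArg Prod.snd (congrFun (Fmap_eq_dot R ▸ hx) k)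
  simpa [sub_eq_zero] using this

lemma upperArm_ne_zero (hx : Fmap n R x = 0) (k : Fin n) : upperArm x k ≠ 0 := fun h => by
  simpa [h, dot] using dot_upperArm_self hx k

lemma sum_dot_fderiv_Fmap (w : Fin n → ℝ × ℝ) (u : ℝ × ℝ) (v : Fin n → ℝ × ℝ) :
    ∑ k, dot (w k) (fderiv ℝ (Fmap n R) x (u, v) k) =
      2 * dot (∑ k, (w k).1 • upperArm x k) u +
        2 * ∑ k, dot ((w k).2 • lowerArm R x k - (w k).1 • upperArm x k) (v k) := by
  simp only [fderiv_Fmap_apply, dot, Prod.fst_sum, Prod.snd_sum, Finset.sum_mul, Finset.mul_sum,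
    ← Finset.sum_add_distrib, Prod.smul_fst, Prod.smul_snd, Prod.fst_sub, Prod.snd_sub, smul_eq_mul]
  exact Finset.sum_congr rfl fun k _ => by ring

lemma not_surjective_fderiv_Fmap_iff_exists_stress :
    ¬ Function.Surjective (fderiv ℝ (Fmap n R) x) ↔ ∃ w : Fin n → ℝ × ℝ, w ≠ 0 ∧
      ∑ k, (w k).1 • upperArm x k = 0 ∧ ∀ k, (w k).1 • upperArm x k = (w k).2 • lowerArm R x k := by
  refine (not_surjective_iff_exists_sum_dot_eq_zero (fderiv ℝ (Fmap n R) x).toLinearMap).trans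
    (exists_congr fun w => and_congr_right fun _ => ⟨fun h => ?_, fun ⟨hsum, hk⟩ z => ?_⟩)
  -- testing against `(A, W)` gives `2 |A|² + 2 ∑ |W_k|² = 0`
  · set A := ∑ k, (w k).1 • upperArm x k
    set W := fun k => (w k).2 • lowerArm R x k - (w k).1 • upperArm x k
    have h0 := h (A, W)
    simp only [ContinuousLinearMap.coe_coe, sum_dot_fderiv_Fmap] at h0
    have hA := dot_self_nonneg A
    have hW := Finset.sum_nonneg fun k (_ : k ∈ Finset.univ) => dot_self_nonneg (W k)
    have hW0 := (Finset.sum_eq_zero_iff_of_nonneg fun k _ => dot_self_nonneg (W k)).1 (by linarith)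
    refine ⟨dot_self_eq_zero.1 (by linarith), fun k => ?_⟩
    exact (sub_eq_zero.1 (dot_self_eq_zero.1 (hW0 k (Finset.mem_univ k)))).symm
  · obtain ⟨u, v⟩ := z
    rw [ContinuousLinearMap.coe_coe, sum_dot_fderiv_Fmap, hsum]
    simp [hk, dot]

open scoped Classical in
/-- The arms that are stretched out (`a_k = b_k`) or folded (`a_k = -b_k`). -/
noncomputable def criticalArms (R : ℝ) (x : Config n) : Finset (Fin n) :=
  {k | upperArm x k = lowerArm R x k ∨ upperArm x k = -lowerArm R x k}

lemma mem_criticalArms {k : Fin n} :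
    k ∈ criticalArms R x ↔ upperArm x k = lowerArm R x k ∨ upperArm x k = -lowerArm R x k := by
  simp [criticalArms]

lemma not_surjective_fderiv_Fmap_iff (hx : Fmap n R x = 0) :
    ¬ Function.Surjective (fderiv ℝ (Fmap n R) x) ↔
      ¬ LinearIndepOn ℝ (upperArm x) (criticalArms R x : Set (Fin n)) := by
  rw [not_surjective_fderiv_Fmap_iff_exists_stress, not_linearIndepOn_finset_iff_exists]
  constructor
  · rintro ⟨w, hw, hsum, hk⟩
    refine ⟨fun k => (w k).1, fun h0 => hw (funext fun k => ?_), fun k hk0 => ?_, hsum⟩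
    · have h1 : (w k).1 = 0 := congrFun h0 k
      have hb : lowerArm R x k ≠ 0 := fun h => by simpa [h, dot] using dot_lowerArm_self hx k
      have h2 := hk k
      rw [h1, zero_smul, eq_comm, smul_eq_zero] at h2
      exact Prod.ext h1 (h2.resolve_right hb)
    · exact mem_criticalArms.2 (eq_or_eq_neg_of_smul_eq_smul (dot_upperArm_self hx k)
        (dot_lowerArm_self hx k) hk0 (hk k))
  · rintro ⟨c, hc, hcrit, hsum⟩
    refine ⟨fun k => (c k, if upperArm x k = lowerArm R x k then c k else -c k),
      fun h => hc (funext fun k => congrArg Prod.fst (congrFun h k)), hsum, fun k => ?_⟩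
    by_cases hck : c k = 0
    · simp [hck]
    dsimp only
    split_ifs with h
    · rw [h]
    · rw [(mem_criticalArms.1 (hcrit k hck)).resolve_left h, smul_neg, neg_smul]

/-- The cosine of the angle subtended by `d` sides of the regular `n`-gon. -/
noncomputable def polygonCos (n : ℕ) (d : ℤ) : ℝ := cos (2 * d * π / n)

lemma polygonCos_neg (d : ℤ) : polygonCos n (-d) = polygonCos n d := by
  rw [polygonCos, polygonCos, ← cos_neg]; push_cast; ring_nf

lemma polygonCos_congr {d e : ℤ} (h : d ≡ e [ZMOD n]) : polygonCos n d = polygonCos n e := by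
  rcases eq_or_ne n 0 with rfl | hn
  · simp only [Int.ModEq, Nat.cast_zero, Int.emod_zero] at h
    rw [h]
  obtain ⟨q, hq⟩ := (Int.modEq_iff_dvd.1 h)
  have : 2 * (e : ℝ) * π / n = 2 * d * π / n + q * (2 * π) := by
    rw [show (e : ℝ) = d + n * q by exact_mod_cast (by linarith : e = d + n * q)]
    field_simp
  rw [polygonCos, polygonCos, this, cos_add_int_mul_two_pi]

lemma polygonCos_sub_self (t : ℤ) : polygonCos n (n - t) = polygonCos n t := by
  rw [← polygonCos_neg t]
  exact polygonCos_congr (Int.modEq_iff_dvd.2 ⟨-1, by ring⟩)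

lemma polygonCos_half_le (hn : 0 < n) {d : ℤ} (hd : |d| ≤ n) :
    polygonCos n (n / 2 : ℕ) ≤ polygonCos n d := by
  -- fold `d` into `[0, n / 2]`, where the angle `2πd/n` stays in `[0, π]`
  obtain ⟨e, he0, hem, hde⟩ :
      ∃ e : ℤ, 0 ≤ e ∧ e ≤ (n / 2 : ℕ) ∧ polygonCos n d = polygonCos n e := by
    have habs : polygonCos n d = polygonCos n |d| := by
      rcases abs_cases d with ⟨h, -⟩ | ⟨h, -⟩ <;> rw [h]; rw [polygonCos_neg]
    by_cases h2 : 2 * |d| ≤ n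
    · exact ⟨|d|, abs_nonneg d, by omega, habs⟩
    · exact ⟨n - |d|, by omega, by omega, habs.trans (polygonCos_sub_self _).symm⟩
  have hnR : (0 : ℝ) < n := by exact_mod_cast hn
  have hmR : 2 * ((n / 2 : ℕ) : ℝ) ≤ n := by exact_mod_cast Nat.mul_div_le n 2
  have heR : (e : ℝ) ≤ ((n / 2 : ℕ) : ℤ) := Int.cast_le.2 hem
  rw [Int.cast_natCast] at heR
  rw [hde, polygonCos, polygonCos, Int.cast_natCast]
  apply cos_le_cos_of_nonneg_of_le_pi
  · have : (0 : ℝ) ≤ e := by exact_mod_cast he0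
    positivity
  · rw [div_le_iff₀ hnR]; nlinarith [pi_pos]
  · gcongr

lemma eq_zero_of_polygonCos_eq_one {d : ℤ} (hd : |d| < n) (h : polygonCos n d = 1) : d = 0 := by
  obtain ⟨q, hq⟩ := (cos_eq_one_iff _).1 h
  have hnR : (n : ℝ) ≠ 0 := by
    have : (0 : ℤ) < n := (abs_nonneg d).trans_lt hd
    exact_mod_cast this.ne'
  have : (q * n : ℤ) = d := by
    have : (q : ℝ) * n = d := by
      field_simp at hq
      nlinarith [pi_pos]
    exact_mod_cast this
  exact Int.eq_zero_of_abs_lt_dvd ⟨q, by rw [← this]; ring⟩ hd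

lemma dot_Bpt_self (k : Fin n) : dot (Bpt n R k) (Bpt n R k) = R ^ 2 := by
  simp only [Bpt, dot]
  linear_combination R ^ 2 * sin_sq_add_cos_sq (2 * (k.val : ℝ) * π / n)

lemma dot_Bpt_sub_Bpt (i j : Fin n) :
    dot (Bpt n R i - Bpt n R j) (Bpt n R i - Bpt n R j) =
      2 * R ^ 2 * (1 - polygonCos n ((i.val : ℤ) - j.val)) := by
  have hcos : polygonCos n ((i.val : ℤ) - j.val) =
      cos (2 * (i.val : ℝ) * π / n - 2 * (j.val : ℝ) * π / n) := by
    rw [polygonCos]; push_cast; ring_nf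
  rw [hcos, cos_sub]
  simp only [Bpt, dot, Prod.fst_sub, Prod.snd_sub]
  linear_combination R ^ 2 * sin_sq_add_cos_sq (2 * (i.val : ℝ) * π / n) +
    R ^ 2 * sin_sq_add_cos_sq (2 * (j.val : ℝ) * π / n)

lemma Bpt_injective (hR : R ≠ 0) : Function.Injective (Bpt n R) := by
  intro i j h
  have hchord := dot_Bpt_sub_Bpt (R := R) i j
  rw [h, sub_self] at hchord
  have hcos : polygonCos n ((i.val : ℤ) - j.val) = 1 := by
    simp only [dot, Prod.fst_zero, Prod.snd_zero, mul_zero, add_zero] at hchord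
    have := (mul_eq_zero.1 hchord.symm).resolve_left (by positivity)
    linarith
  have hd : |(i.val : ℤ) - j.val| < n := abs_sub_lt_iff.2 ⟨by omega, by omega⟩
  have := eq_zero_of_polygonCos_eq_one hd hcos
  exact Fin.ext (by omega)

lemma dmax_nonneg (n : ℕ) : 0 ≤ dmax n := by
  unfold dmax; split_ifs <;> positivity

lemma dmax_sq (hn : 0 < n) : dmax n ^ 2 = 2 - 2 * polygonCos n (n / 2 : ℕ) := by
  simp only [dmax, polygonCos, Int.cast_natCast]
  split_ifs with he
  · obtain ⟨m, rfl⟩ := he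
    have hm : (m : ℝ) ≠ 0 := by
      have : m ≠ 0 := by omega
      exact_mod_cast this
    have : 2 * (((m + m) / 2 : ℕ) : ℝ) * π / ((m + m : ℕ) : ℝ) = π := by
      rw [show (m + m) / 2 = m by omega]; push_cast; field_simp; ring
    rw [this, cos_pi]; norm_num
  · exact sq_sqrt (by nlinarith [cos_le_one (2 * ((n / 2 : ℕ) : ℝ) * π / n)])

lemma dmax_le_two (hn : 0 < n) : dmax n ≤ 2 := by
  have : -1 ≤ polygonCos n (n / 2 : ℕ) := neg_one_le_cos _
  nlinarith [dmax_sq hn, dmax_nonneg n]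

lemma dot_Bpt_sub_Bpt_le (i j : Fin n) :
    dot (Bpt n R i - Bpt n R j) (Bpt n R i - Bpt n R j) ≤ (R * dmax n) ^ 2 := by
  have hn := i.pos
  rw [dot_Bpt_sub_Bpt, mul_pow, dmax_sq hn]
  have := polygonCos_half_le hn (d := (i.val : ℤ) - j.val) (abs_sub_le_iff.2 ⟨by omega, by omega⟩)
  nlinarith [sq_nonneg R]

def addMod (k : Fin n) (t : ℕ) : Fin n := ⟨(k + t) % n, Nat.mod_lt _ k.pos⟩

lemma dot_Bpt_sub_Bpt_addMod (k : Fin n) (t : ℕ) :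
    dot (Bpt n R k - Bpt n R (addMod k t)) (Bpt n R k - Bpt n R (addMod k t)) =
      2 * R ^ 2 * (1 - polygonCos n t) := by
  have h : ((k.val : ℤ) + t) % n ≡ k.val + t [ZMOD n] := Int.mod_modEq _ _
  have h' : (k.val : ℤ) - (addMod k t).val ≡ -t [ZMOD n] := by
    simp only [addMod]; push_cast
    simpa using (Int.ModEq.refl (k.val : ℤ)).sub h
  rw [dot_Bpt_sub_Bpt, polygonCos_congr h', polygonCos_neg]

lemma dot_Bpt_sub_Bpt_addMod_half (hRd : R * dmax n = 2) (k : Fin n) :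
    dot (Bpt n R k - Bpt n R (addMod k (n / 2))) (Bpt n R k - Bpt n R (addMod k (n / 2))) = 4 := by
  have := congrArg (· ^ 2) hRd
  simp only [mul_pow, dmax_sq k.pos] at this
  rw [dot_Bpt_sub_Bpt_addMod]
  linarith

lemma dot_Bpt_sub_Bpt_addMod_half_succ (ho : Odd n) (hRd : R * dmax n = 2) (k : Fin n) :
    dot (Bpt n R k - Bpt n R (addMod k (n / 2 + 1))) (Bpt n R k - Bpt n R (addMod k (n / 2 + 1))) =
      4 := by
  have h : polygonCos n (n / 2 + 1 : ℕ) = polygonCos n (n / 2 : ℕ) := by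
    rw [← polygonCos_sub_self]
    obtain ⟨m, rfl⟩ := ho
    congr 1
    push_cast
    omega
  rw [dot_Bpt_sub_Bpt_addMod, h, ← dot_Bpt_sub_Bpt_addMod, dot_Bpt_sub_Bpt_addMod_half hRd k]

lemma addMod_half_ne_addMod_half_succ (hn : 2 ≤ n) (k : Fin n) :
    addMod k (n / 2) ≠ addMod k (n / 2 + 1) := by
  intro h
  have h' : k.val + n / 2 ≡ k.val + (n / 2 + 1) [MOD n] := congrArg Fin.val h
  have := (Nat.modEq_iff_dvd' (by omega)).1 (Nat.ModEq.add_left_cancel' _ h')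
  rw [Nat.add_sub_cancel_left, Nat.dvd_one] at this
  omega

lemma Bpt_eq_neg_of_dot_sub_eq_four (hR : R = 1) {i j : Fin n}
    (h : dot (Bpt n R i - Bpt n R j) (Bpt n R i - Bpt n R j) = 4) : Bpt n R j = -Bpt n R i := by
  have hunit : ∀ l, dot (Bpt n R l) (Bpt n R l) = 1 := fun l => by rw [dot_Bpt_self, hR, one_pow]
  have := eq_of_dot_add_self_eq_four (u := Bpt n R i) (v := -Bpt n R j) (hunit i)
    (by simpa [dot] using hunit j) (by simpa [sub_eq_add_neg] using h)
  rw [this, neg_neg]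

lemma eq_or_eq_or_eq_of_dot_sub_Bpt_eq_four (hR : R ≠ 0) {C : ℝ × ℝ} (hC : C ≠ 0)
    {p q l : Fin n} (hp : dot (C - Bpt n R p) (C - Bpt n R p) = 4)
    (hq : dot (C - Bpt n R q) (C - Bpt n R q) = 4) (hl : dot (C - Bpt n R l) (C - Bpt n R l) = 4) :
    p = q ∨ p = l ∨ q = l := by
  rcases eq_or_eq_or_eq_of_mem_two_circles hC (p := Bpt n R p) (q := Bpt n R q) (s := Bpt n R l)
    (by rw [dot_Bpt_self, dot_Bpt_self]) (by rw [dot_Bpt_self, dot_Bpt_self])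
    (by rw [hq, hp]) (by rw [hl, hp]) with h | h | h
  exacts [Or.inl (Bpt_injective hR h), Or.inr (Or.inl (Bpt_injective hR h)),
    Or.inr (Or.inr (Bpt_injective hR h))]

lemma dot_sub_Bpt_le_four (hx : Fmap n R x = 0) (k : Fin n) :
    dot (x.1 - Bpt n R k) (x.1 - Bpt n R k) ≤ 4 := by
  rw [← upperArm_add_lowerArm]
  exact dot_add_self_le_four (dot_upperArm_self hx k) (dot_lowerArm_self hx k)

lemma upperArm_eq_lowerArm_iff (hx : Fmap n R x = 0) (k : Fin n) :
    upperArm x k = lowerArm R x k ↔ dot (x.1 - Bpt n R k) (x.1 - Bpt n R k) = 4 := by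
  rw [← upperArm_add_lowerArm]
  refine ⟨fun h => ?_, eq_of_dot_add_self_eq_four (dot_upperArm_self hx k) (dot_lowerArm_self hx k)⟩
  have := dot_upperArm_self hx k
  rw [h] at this ⊢
  simp only [dot, Prod.fst_add, Prod.snd_add] at this ⊢
  linear_combination 4 * this

lemma upperArm_eq_neg_lowerArm_iff (k : Fin n) :
    upperArm x k = -lowerArm R x k ↔ x.1 = Bpt n R k := by
  rw [← add_eq_zero_iff_eq_neg, upperArm_add_lowerArm, sub_eq_zero]

lemma folded_mem_criticalArms {k : Fin n} (hk : x.1 = Bpt n R k) : k ∈ criticalArms R x :=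
  mem_criticalArms.2 (Or.inr ((upperArm_eq_neg_lowerArm_iff k).2 hk))

lemma stretched_mem_criticalArms (hx : Fmap n R x = 0) {k : Fin n}
    (hk : dot (x.1 - Bpt n R k) (x.1 - Bpt n R k) = 4) : k ∈ criticalArms R x :=
  mem_criticalArms.2 (Or.inl ((upperArm_eq_lowerArm_iff hx k).2 hk))

lemma ne_of_dot_sub_Bpt_eq_four {k j : Fin n} (hk : x.1 = Bpt n R k)
    (hj : dot (x.1 - Bpt n R j) (x.1 - Bpt n R j) = 4) : j ≠ k := by
  rintro rfl
  simp [hk, dot] at hj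

lemma lowerArm_eq_neg_upperArm {k : Fin n} (hk : x.1 = Bpt n R k) :
    lowerArm R x k = -upperArm x k := by
  rw [(upperArm_eq_neg_lowerArm_iff k).2 hk, neg_neg]

lemma sub_Bpt_eq_two_smul_upperArm (hx : Fmap n R x = 0) {k : Fin n}
    (hk : dot (x.1 - Bpt n R k) (x.1 - Bpt n R k) = 4) :
    x.1 - Bpt n R k = (2 : ℝ) • upperArm x k := by
  rw [two_smul]
  nth_rw 2 [(upperArm_eq_lowerArm_iff hx k).2 hk]
  rw [upperArm_add_lowerArm]

lemma Bpt_sub_Bpt_eq_of_stretched (hx : Fmap n R x = 0) {k j : Fin n} (hk : x.1 = Bpt n R k)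
    (hj : dot (x.1 - Bpt n R j) (x.1 - Bpt n R j) = 4) :
    Bpt n R j - Bpt n R k = -(2 : ℝ) • upperArm x j := by
  rw [neg_smul, ← sub_Bpt_eq_two_smul_upperArm hx hj, hk, neg_sub]

lemma exists_folded_of_sum_smul_eq_zero (hx : Fmap n R x = 0) (hR0 : 0 < R) (hR2 : R < 2)
    {c : Fin n → ℝ} (hc : c ≠ 0) (hcrit : ∀ k, c k ≠ 0 → k ∈ criticalArms R x)
    (hsum : ∑ k, c k • upperArm x k = 0) : ∃ k, c k ≠ 0 ∧ x.1 = Bpt n R k := by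
  by_contra! hfold
  have hdist : ∀ k, c k ≠ 0 → dot (x.1 - Bpt n R k) (x.1 - Bpt n R k) = 4 := fun k hk =>
    (upperArm_eq_lowerArm_iff hx k).1 <| (mem_criticalArms.1 (hcrit k hk)).resolve_right
      fun h => hfold k hk ((upperArm_eq_neg_lowerArm_iff k).1 h)
  obtain ⟨p, hp⟩ := Function.ne_iff.1 hc
  obtain ⟨q, hqp, hq⟩ := exists_ne_ne_zero_of_sum_smul_eq_zero hsum hp (upperArm_ne_zero hx p)
  have hC : x.1 ≠ 0 := fun h0 => by
    have h4 := hdist p hp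
    rw [h0, zero_sub, show dot (-Bpt n R p) (-Bpt n R p) = dot (Bpt n R p) (Bpt n R p) by
      simp [dot], dot_Bpt_self] at h4
    nlinarith
  have hsupp : ∀ l, l ≠ p ∧ l ≠ q → c l • upperArm x l = 0 := by
    rintro l ⟨hlp, hlq⟩
    by_contra hl
    rcases eq_or_eq_or_eq_of_dot_sub_Bpt_eq_four hR0.ne' hC (hdist p hp) (hdist q hq)
      (hdist l (left_ne_zero_of_smul hl)) with h | h | h
    exacts [hqp h.symm, hlp h.symm, hlq h.symm]
  rw [Fintype.sum_eq_add p q hqp.symm hsupp, add_eq_zero_iff_eq_neg, ← neg_smul] at hsum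
  have hpq : Bpt n R p - Bpt n R q = (2 : ℝ) • (upperArm x q - upperArm x p) := by
    rw [smul_sub, ← sub_Bpt_eq_two_smul_upperArm hx (hdist q hq),
      ← sub_Bpt_eq_two_smul_upperArm hx (hdist p hp), sub_sub_sub_cancel_left]
  rcases eq_or_eq_neg_of_smul_eq_smul (dot_upperArm_self hx p) (dot_upperArm_self hx q) hp hsum
    with h | h
  · rw [h, sub_self, smul_zero, sub_eq_zero] at hpq
    exact hqp (Bpt_injective hR0.ne' hpq).symm
  · -- the chord `B_p - B_q = 4 a_q` would be longer than the diameter `2R < 4`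
    have h16 : dot (Bpt n R p - Bpt n R q) (Bpt n R p - Bpt n R q) = 16 := by
      have hu := dot_upperArm_self hx q
      rw [hpq, h]
      simp only [dot, Prod.smul_fst, Prod.smul_snd, Prod.fst_sub, Prod.snd_sub, Prod.fst_neg,
        Prod.snd_neg, smul_eq_mul] at hu ⊢
      linear_combination 16 * hu
    have hle := dot_Bpt_sub_Bpt_le (R := R) p q
    have hRd : R * dmax n < 4 := by nlinarith [dmax_le_two p.pos, dmax_nonneg n]
    nlinarith [mul_nonneg hR0.le (dmax_nonneg n)]

lemma exists_stretched_of_folded (hx : Fmap n R x = 0) (hR : R ≠ 0) {c : Fin n → ℝ}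
    (hcrit : ∀ k, c k ≠ 0 → k ∈ criticalArms R x) (hsum : ∑ k, c k • upperArm x k = 0)
    {k : Fin n} (hck : c k ≠ 0) (hk : x.1 = Bpt n R k) :
    ∃ j, dot (x.1 - Bpt n R j) (x.1 - Bpt n R j) = 4 := by
  obtain ⟨j, hjk, hj⟩ := exists_ne_ne_zero_of_sum_smul_eq_zero hsum hck (upperArm_ne_zero hx k)
  refine ⟨j, (upperArm_eq_lowerArm_iff hx j).1 ((mem_criticalArms.1 (hcrit j hj)).resolve_right ?_)⟩
  rw [upperArm_eq_neg_lowerArm_iff, hk]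
  exact fun h => hjk (Bpt_injective hR h).symm

lemma mul_dmax_eq_two (hx : Fmap n R x = 0) (hR : 0 ≤ R) {k j : Fin n} (hk : x.1 = Bpt n R k)
    (hj : dot (x.1 - Bpt n R j) (x.1 - Bpt n R j) = 4) : R * dmax n = 2 := by
  have hle : 4 ≤ (R * dmax n) ^ 2 := hj ▸ hk ▸ dot_Bpt_sub_Bpt_le k j
  have hge : (R * dmax n) ^ 2 ≤ 4 := by
    have := dot_sub_Bpt_le_four hx (addMod k (n / 2))
    rw [hk, dot_Bpt_sub_Bpt_addMod] at this
    rw [mul_pow, dmax_sq k.pos]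
    linarith
  exact (pow_left_inj₀ (mul_nonneg hR (dmax_nonneg n)) zero_le_two two_ne_zero).1 (by linarith)

lemma cross_lowerArm_eq_zero_of_even (hx : Fmap n R x = 0) (hR0 : 0 < R) (he : Even n)
    (hRd : R * dmax n = 2) {c : Fin n → ℝ} (hcrit : ∀ k, c k ≠ 0 → k ∈ criticalArms R x)
    (hsum : ∑ k, c k • upperArm x k = 0) {k : Fin n} (hck : c k ≠ 0) (hk : x.1 = Bpt n R k) :
    cross (lowerArm R x k) (Bpt n R (addMod k (n / 2)) - Bpt n R k) = 0 := by
  set j := addMod k (n / 2)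
  have hR1 : R = 1 := by simpa [dmax, he] using hRd
  have hj4 : dot (x.1 - Bpt n R j) (x.1 - Bpt n R j) = 4 := by
    rw [hk]; exact dot_Bpt_sub_Bpt_addMod_half hRd k
  have hjk := ne_of_dot_sub_Bpt_eq_four hk hj4
  have hsupp : ∀ l, l ≠ k ∧ l ≠ j → c l • upperArm x l = 0 := by
    rintro l ⟨hlk, hlj⟩
    by_contra hl
    have hfold : upperArm x l ≠ -lowerArm R x l := by
      rw [Ne, upperArm_eq_neg_lowerArm_iff, hk]
      exact fun h => hlk (Bpt_injective hR0.ne' h).symm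
    have hl4 := (upperArm_eq_lowerArm_iff hx l).1
      ((mem_criticalArms.1 (hcrit l (left_ne_zero_of_smul hl))).resolve_right hfold)
    rw [hk] at hl4 hj4
    exact hlj (Bpt_injective hR0.ne' ((Bpt_eq_neg_of_dot_sub_eq_four hR1 hl4).trans
      (Bpt_eq_neg_of_dot_sub_eq_four hR1 hj4).symm))
  rw [Fintype.sum_eq_add k j hjk.symm hsupp, add_eq_zero_iff_eq_neg, ← neg_smul] at hsum
  rw [lowerArm_eq_neg_upperArm hk, Bpt_sub_Bpt_eq_of_stretched hx hk hj4]
  rcases eq_or_eq_neg_of_smul_eq_smul (dot_upperArm_self hx k) (dot_upperArm_self hx j) hck hsum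
    with h | h <;> rw [h] <;> simp [cross] <;> ring

lemma not_linearIndepOn_criticalArms_of_two_stretched (hx : Fmap n R x = 0) {k i j : Fin n}
    (hk : x.1 = Bpt n R k) (hij : i ≠ j) (hi : dot (x.1 - Bpt n R i) (x.1 - Bpt n R i) = 4)
    (hj : dot (x.1 - Bpt n R j) (x.1 - Bpt n R j) = 4) :
    ¬ LinearIndepOn ℝ (upperArm x) (criticalArms R x : Set (Fin n)) := by
  intro hli
  have hsub : ({k, i, j} : Finset (Fin n)) ⊆ criticalArms R x := by
    simp only [Finset.insert_subset_iff, Finset.singleton_subset_iff]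
    exact ⟨folded_mem_criticalArms hk, stretched_mem_criticalArms hx hi,
      stretched_mem_criticalArms hx hj⟩
  have := (hli.mono (Finset.coe_subset.2 hsub)).linearIndependent.fintype_card_le_finrank
  simp [Finset.card_insert_of_notMem, hij, (ne_of_dot_sub_Bpt_eq_four hk hi).symm,
    (ne_of_dot_sub_Bpt_eq_four hk hj).symm] at this

lemma not_linearIndepOn_criticalArms_of_cross_eq_zero (hx : Fmap n R x = 0) {k j : Fin n}
    (hk : x.1 = Bpt n R k) (hj : dot (x.1 - Bpt n R j) (x.1 - Bpt n R j) = 4)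
    (hcross : cross (lowerArm R x k) (Bpt n R j - Bpt n R k) = 0) :
    ¬ LinearIndepOn ℝ (upperArm x) (criticalArms R x : Set (Fin n)) := by
  intro hli
  have hsub : ({k, j} : Finset (Fin n)) ⊆ criticalArms R x := by
    simp only [Finset.insert_subset_iff, Finset.singleton_subset_iff]
    exact ⟨folded_mem_criticalArms hk, stretched_mem_criticalArms hx hj⟩
  have hpair := hli.mono (Finset.coe_subset.2 hsub)
  rw [Finset.coe_pair, linearIndepOn_pair_iff _ (ne_of_dot_sub_Bpt_eq_four hk hj).symm
    (upperArm_ne_zero hx k)] at hpair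
  rw [lowerArm_eq_neg_upperArm hk, Bpt_sub_Bpt_eq_of_stretched hx hk hj] at hcross
  have hcross' : cross (upperArm x k) (upperArm x j) = 0 := by
    simp only [cross, Prod.fst_neg, Prod.snd_neg, Prod.smul_fst, Prod.smul_snd,
      smul_eq_mul] at hcross ⊢
    linarith
  rcases eq_or_eq_neg_of_cross_eq_zero (dot_upperArm_self hx k) (dot_upperArm_self hx j) hcross'
    with h | h
  · exact hpair 1 (by rw [one_smul, h])
  · exact hpair (-1) (by rw [neg_one_smul, h, neg_neg])

end Spider

open Spider

/-- For `0 < R < 2` and `x ∈ M_n(R) = F⁻¹(0)`, the Fréchet derivative of `F` at `x`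
fails to be surjective iff `R = R_n` and either
(i) `n` is even and for some `k` the body is at `B_k`, the `(k + n/2)`-th arm is
stretched out, and `J_k` lies on the line through `B_k` and `B_{k+n/2}`; or
(ii) `n` is odd and for some `k` the body is at `B_k` and two distinct arms are
stretched out. -/
theorem stmt5 (n : ℕ) (hn : 2 ≤ n) (R : ℝ) (hR0 : 0 < R) (hR2 : R < 2)
    (x : (ℝ × ℝ) × (Fin n → ℝ × ℝ)) (hx : Fmap n R x = 0) :
    ¬ Function.Surjective (fderiv ℝ (Fmap n R) x) ↔
      (R = Rcrit n ∧
        ((Even n ∧ ∃ k j : Fin n,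
            ((j : ℕ) : ZMod n) = ((k : ℕ) : ZMod n) + ((n / 2 : ℕ) : ZMod n) ∧
            x.1 = Bpt n R k ∧ enorm2 (x.1 - Bpt n R j) = 2 ∧
            ((x.2 k).1 - (Bpt n R k).1) * ((Bpt n R j).2 - (Bpt n R k).2) -
              ((x.2 k).2 - (Bpt n R k).2) * ((Bpt n R j).1 - (Bpt n R k).1) = 0) ∨
         (Odd n ∧ ∃ k : Fin n, x.1 = Bpt n R k ∧
            ∃ i j : Fin n, i ≠ j ∧ enorm2 (x.1 - Bpt n R i) = 2 ∧
              enorm2 (x.1 - Bpt n R j) = 2))) := by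
  rw [not_surjective_fderiv_Fmap_iff hx]
  constructor
  · intro hdep
    obtain ⟨c, hc, hcrit, hsum⟩ := not_linearIndepOn_finset_iff_exists.1 hdep
    obtain ⟨k, hck, hk⟩ := exists_folded_of_sum_smul_eq_zero hx hR0 hR2 hc hcrit hsum
    obtain ⟨j, hj⟩ := exists_stretched_of_folded hx hR0.ne' hcrit hsum hck hk
    have hRd := mul_dmax_eq_two hx hR0.le hk hj
    refine ⟨eq_div_of_mul_eq (right_ne_zero_of_mul (hRd ▸ two_ne_zero)) hRd, ?_⟩
    have hfar : ∀ t,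
        dot (Bpt n R k - Bpt n R (addMod k t)) (Bpt n R k - Bpt n R (addMod k t)) = 4 →
        enorm2 (x.1 - Bpt n R (addMod k t)) = 2 := fun t h => enorm2_eq_two_iff.2 (hk ▸ h)
    rcases Nat.even_or_odd n with he | ho
    · refine Or.inl ⟨he, k, addMod k (n / 2), by simp [addMod], hk,
        hfar _ (dot_Bpt_sub_Bpt_addMod_half hRd k),
        cross_lowerArm_eq_zero_of_even hx hR0 he hRd hcrit hsum hck hk⟩
    · exact Or.inr ⟨ho, k, hk, _, _, addMod_half_ne_addMod_half_succ hn k,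
        hfar _ (dot_Bpt_sub_Bpt_addMod_half hRd k),
        hfar _ (dot_Bpt_sub_Bpt_addMod_half_succ ho hRd k)⟩
  · rintro ⟨-, ⟨-, k, j, -, hk, hj, hcross⟩ | ⟨-, k, hk, i, j, hij, hi, hj⟩⟩
    · exact not_linearIndepOn_criticalArms_of_cross_eq_zero hx hk (enorm2_eq_two_iff.1 hj) hcross
    · exact not_linearIndepOn_criticalArms_of_two_stretched hx hk hij (enorm2_eq_two_iff.1 hi)
        (enorm2_eq_two_iff.1 hj)
end
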